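/- The pruned run DAG G' of an NBW A on an infinite word w is accepting if and only if A accepts w; that is, G' contains an initial path with infinitely many F-nodes iff A has an accepting run on w. -/

import Mathlib

/-!
Profile trees for Büchi determinization (Fisman–Kupferman–Vardi–Wilke style profiles).
Common definitions: nondeterministic Büchi word automata (NBW), the run DAG `G`,
profiles of nodes, and the pruned run DAG `G'`.
-/

/-- A nondeterministic Büchi word automaton `A = (Alph, Q, Qin, ρ, F)` with `Qin ∩ F = ∅`. -/
structure NBW (Alph Q : Type*) where
  Qin : Set Q
  ρ : Q → Alph → Set Q
  F : Set Q
  disj : Qin ∩ F = ∅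

variable {Alph Q : Type*} (A : NBW Alph Q) (w : ℕ → Alph)

/-- Lexicographic order `L₁ ≤ L₂` on profiles (lists over ℕ). -/
def lexLE (L₁ L₂ : List ℕ) : Prop :=
  List.Lex (· < ·) L₁ L₂ ∨ L₁ = L₂

/-- Strict lexicographic order `L₁ < L₂` on profiles. -/
def lexLT (L₁ L₂ : List ℕ) : Prop :=
  List.Lex (· < ·) L₁ L₂

open Classical in
/-- The profiles of all finite initial runs of `A` (on `w`) to the node `v = (q, i)`:
for each run `p₀,…,p_i` with `p₀ ∈ Qin`, `p_{j+1} ∈ ρ(p_j, w_j)` and `p_i = q`, the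
sequence of `F`-visitation labels `f(p₀,0) ⋯ f(p_i,i)` (where `f` is 1 on `F`-nodes, else 0). -/
def runProfiles (v : Q × ℕ) : Set (List ℕ) :=
  { L | ∃ p : ℕ → Q, p 0 ∈ A.Qin ∧ (∀ j < v.2, p (j + 1) ∈ A.ρ (p j) (w j)) ∧
        p v.2 = v.1 ∧ L = (List.range (v.2 + 1)).map (fun j => if p j ∈ A.F then 1 else 0) }

/-- `v` is a node of the run DAG `G = (V, E)` (equivalently of the pruned DAG `G'`):
there is a finite run of `A` to `v.1` on `w₀ ⋯ w_{v.2 - 1}`. -/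
def memV (v : Q × ℕ) : Prop := (runProfiles A w v).Nonempty

/-- `L` is the lexicographically maximal profile among all initial paths to `v`. -/
def IsMaxProfile (v : Q × ℕ) (L : List ℕ) : Prop :=
  L ∈ runProfiles A w v ∧ ∀ L' ∈ runProfiles A w v, lexLE L' L

open Classical in
/-- The profile `h_v` of a node `v`: the lexicographically maximal profile of an
initial path to `v` (junk value `[]` if `v` is not a node of the DAG). -/
noncomputable def profile (v : Q × ℕ) : List ℕ :=
  if h : ∃ L, IsMaxProfile A w v L then h.choose else []

/-- The edge relation `E` of the run DAG `G`: `E((q,i), (q',i+1))` iff `(q,i) ∈ V`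
and `q' ∈ ρ(q, w_i)`. -/
def edgeG (u v : Q × ℕ) : Prop :=
  memV A w u ∧ v.2 = u.2 + 1 ∧ v.1 ∈ A.ρ u.1 (w u.2)

/-- The edge relation `E'` of the pruned run DAG `G'`: `(u,v) ∈ E` and every
`E`-parent `u'` of `v` satisfies `h_{u'} ≤ h_u`. -/
def edgeG' (u v : Q × ℕ) : Prop :=
  edgeG A w u v ∧ ∀ u', edgeG A w u' v → lexLE (profile A w u') (profile A w u)

/-- `A` accepts `w`: some run visits `F` infinitely often. -/
def AcceptsNBW : Prop :=
  ∃ p : ℕ → Q, (p 0 ∈ A.Qin ∧ ∀ i, p (i + 1) ∈ A.ρ (p i) (w i)) ∧ ∀ n, ∃ i ≥ n, p i ∈ A.F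

/-- The pruned run DAG `G'` is accepting: it contains an initial path with
infinitely many `F`-nodes. -/
def GprimeAccepting : Prop :=
  ∃ p : ℕ → Q, p 0 ∈ A.Qin ∧ (∀ i, edgeG' A w (p i, i) (p (i + 1), i + 1)) ∧
    ∀ n, ∃ i ≥ n, p i ∈ A.F

/-!
If `A` accepts `w`, choose for every `n` an accepting run `r n` whose profile up to time `n`
is lexicographically maximal among accepting runs. An initial run to a `G`-parent of a node of
`r n` can be spliced into `r n`, giving again an accepting run; hence up to time `n` the nodes
of `r n` carry their profiles `h_v` and `r n` follows edges of `G'`. The maximal profiles are coherent in `n`, and because each `r n` is accepting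
their limit has infinitely many ones. König's lemma then gives an infinite initial path of `G'`
realizing this limit.
-/

theorem List.Lex.append_of_length_eq {α : Type*} {r : α → α → Prop} {l₁ l₂ : List α}
    (t₁ t₂ : List α) (h : List.Lex r l₁ l₂) (hlen : l₁.length = l₂.length) :
    List.Lex r (l₁ ++ t₁) (l₂ ++ t₂) := by
  induction h with
  | nil => simp at hlen
  | cons _ ih => exact .cons (ih (by simpa using hlen))
  | rel h => exact .rel h

theorem List.map_le_map {α β : Type*} [LinearOrder α] {f g : β → α} :
    ∀ {l : List β}, (∀ x ∈ l, f x ≤ g x) → l.map f ≤ l.map g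
  | [], _ => le_rfl
  | a :: l, h => by
    obtain hlt | heq := (h a List.mem_cons_self).lt_or_eq
    · exact le_of_lt (List.Lex.rel hlt)
    · rw [List.map_cons, List.map_cons, heq]
      exact List.cons_le_cons _ (List.map_le_map fun x hx => h x (List.mem_cons_of_mem _ hx))

theorem lexLE_iff_le (L₁ L₂ : List ℕ) : lexLE L₁ L₂ ↔ L₁ ≤ L₂ :=
  Or.comm

theorem exists_path_of_forall_exists_finite_path {V : Type*} [Finite V] (I : Set V)
    (R : ℕ → V → V → Prop) (h : ∀ n, ∃ p : ℕ → V, p 0 ∈ I ∧ ∀ j < n, R j (p j) (p (j + 1))) :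
    ∃ p : ℕ → V, p 0 ∈ I ∧ ∀ j, R j (p j) (p (j + 1)) := by
  let : TopologicalSpace V := ⊥
  have : DiscreteTopology V := ⟨rfl⟩
  let C (n : ℕ) : Set (ℕ → V) := {p | p 0 ∈ I ∧ ∀ j < n, R j (p j) (p (j + 1))}
  have hC : ∀ n, IsClosed (C n) := by
    intro n
    have hstep : ∀ j, IsClosed {p : ℕ → V | R j (p j) (p (j + 1))} := fun j =>
      (isClosed_discrete {x : V × V | R j x.1 x.2}).preimage
        (f := fun p : ℕ → V => (p j, p (j + 1))) (by fun_prop)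
    have hCeq : C n = (fun p => p 0) ⁻¹' I ∩ ⋂ j < n, {p | R j (p j) (p (j + 1))} := by
      ext p; simp [C]
    rw [hCeq]
    exact ((isClosed_discrete I).preimage (continuous_apply 0)).inter
      (isClosed_biInter fun j _ => hstep j)
  obtain ⟨p, hp⟩ := IsCompact.nonempty_iInter_of_sequence_nonempty_isCompact_isClosed C
    (fun n _ hp => ⟨hp.1, fun j hj => hp.2 j (by omega)⟩) h (hC 0).isCompact hC
  simp only [Set.mem_iInter] at hp
  exact ⟨p, (hp 0).1, fun j => (hp (j + 1)).2 j (by omega)⟩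

namespace NBW

open Classical in
noncomputable def prefixProfile (p : ℕ → Q) (n : ℕ) : List ℕ :=
  (List.range (n + 1)).map fun j => if p j ∈ A.F then 1 else 0

def IsRunPrefix (p : ℕ → Q) (n : ℕ) : Prop :=
  p 0 ∈ A.Qin ∧ ∀ j < n, p (j + 1) ∈ A.ρ (p j) (w j)

def IsAcceptingRun (p : ℕ → Q) : Prop :=
  (p 0 ∈ A.Qin ∧ ∀ i, p (i + 1) ∈ A.ρ (p i) (w i)) ∧ ∀ n, ∃ i ≥ n, p i ∈ A.F

variable {A w}

theorem length_prefixProfile (p : ℕ → Q) (n : ℕ) : (A.prefixProfile p n).length = n + 1 := by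
  simp [prefixProfile]

theorem prefixProfile_eq_iff {p q : ℕ → Q} {n : ℕ} :
    A.prefixProfile p n = A.prefixProfile q n ↔ ∀ j ≤ n, (p j ∈ A.F ↔ q j ∈ A.F) := by
  simp only [prefixProfile, List.map_inj_left, List.mem_range, Nat.lt_succ_iff]
  refine forall₂_congr fun j _ => ?_
  split_ifs <;> simp_all

open Classical in
theorem prefixProfile_succ (p : ℕ → Q) (n : ℕ) : A.prefixProfile p (n + 1) =
    A.prefixProfile p n ++ [if p (n + 1) ∈ A.F then 1 else 0] := by
  simp [prefixProfile, List.range_succ]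

theorem prefixProfile_lt_of_lt {p q : ℕ → Q} {m n : ℕ} (hmn : m ≤ n)
    (h : A.prefixProfile p m < A.prefixProfile q m) :
    A.prefixProfile p n < A.prefixProfile q n := by
  induction n, hmn using Nat.le_induction with
  | base => exact h
  | succ n _ ih =>
    rw [prefixProfile_succ, prefixProfile_succ]
    exact List.Lex.append_of_length_eq _ _ ih (by simp [length_prefixProfile])

theorem prefixProfile_mono {p q : ℕ → Q} {n : ℕ} (h : ∀ j ≤ n, p j ∈ A.F → q j ∈ A.F) :
    A.prefixProfile p n ≤ A.prefixProfile q n := by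
  refine List.map_le_map fun j hj => ?_
  have hjn : j ≤ n := Nat.lt_succ_iff.mp (List.mem_range.mp hj)
  by_cases hp : p j ∈ A.F
  · simp [hp, h j hjn hp]
  · simp [hp]

open Classical in
theorem finite_range_prefixProfile (n : ℕ) :
    (Set.range fun p : ℕ → Q => A.prefixProfile p n).Finite := by
  refine ((List.finite_length_eq Prop (n + 1)).image
    (List.map fun P => if P then 1 else 0)).subset ?_
  rintro _ ⟨p, rfl⟩
  -- a profile only records the propositions `p j ∈ A.F`
  exact ⟨(List.range (n + 1)).map fun j => p j ∈ A.F, by simp, by simp [prefixProfile]⟩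

theorem exists_forall_prefixProfile_le {S : Set (ℕ → Q)} (hS : S.Nonempty) (n : ℕ) :
    ∃ r ∈ S, ∀ p ∈ S, A.prefixProfile p n ≤ A.prefixProfile r n := by
  obtain ⟨_, ⟨r, hr, rfl⟩, hmax⟩ := Set.exists_max_image ((A.prefixProfile · n) '' S) id
    ((A.finite_range_prefixProfile n).subset (Set.image_subset_range _ _)) (hS.image _)
  exact ⟨r, hr, fun p hp => hmax _ ⟨p, hp, rfl⟩⟩

theorem mem_runProfiles {v : Q × ℕ} {L : List ℕ} : L ∈ runProfiles A w v ↔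
    ∃ p, A.IsRunPrefix w p v.2 ∧ p v.2 = v.1 ∧ L = A.prefixProfile p v.2 := by
  simp only [runProfiles, IsRunPrefix, prefixProfile, Set.mem_ofPred_eq, and_assoc]

theorem exists_isMaxProfile {v : Q × ℕ} (hv : memV A w v) : ∃ L, IsMaxProfile A w v L := by
  obtain ⟨p, hp, hpv, -⟩ := mem_runProfiles.mp hv.some_mem
  obtain ⟨r, ⟨hr, hrv⟩, hmax⟩ := A.exists_forall_prefixProfile_le
    (S := {p | A.IsRunPrefix w p v.2 ∧ p v.2 = v.1}) ⟨p, hp, hpv⟩ v.2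
  refine ⟨A.prefixProfile r v.2, mem_runProfiles.mpr ⟨r, hr, hrv, rfl⟩, fun L hL => ?_⟩
  obtain ⟨q, hq, hqv, rfl⟩ := mem_runProfiles.mp hL
  exact (lexLE_iff_le _ _).mpr (hmax q ⟨hq, hqv⟩)

theorem profile_eq_of_isMaxProfile {v : Q × ℕ} {L : List ℕ} (h : IsMaxProfile A w v L) :
    profile A w v = L := by
  have hex : ∃ L, IsMaxProfile A w v L := ⟨L, h⟩
  have hmax := hex.choose_spec
  rw [profile, dif_pos hex]
  exact le_antisymm ((lexLE_iff_le _ _).mp (h.2 _ hmax.1)) ((lexLE_iff_le _ _).mp (hmax.2 _ h.1))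

theorem isMaxProfile_profile {v : Q × ℕ} (hv : memV A w v) :
    IsMaxProfile A w v (profile A w v) := by
  obtain ⟨L, hL⟩ := exists_isMaxProfile hv
  rwa [profile_eq_of_isMaxProfile hL]

theorem IsAcceptingRun.piecewise {q r : ℕ → Q} {j : ℕ} (hq : A.IsRunPrefix w q j)
    (hr : A.IsAcceptingRun w r) (hjoin : r (j + 1) ∈ A.ρ (q j) (w j)) :
    A.IsAcceptingRun w ((Set.Iic j).piecewise q r) := by
  set s := (Set.Iic j).piecewise q r
  have hs_le : ∀ i ≤ j, s i = q i := fun i hi => Set.piecewise_eq_of_mem _ _ _ hi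
  have hs_gt : ∀ i, j < i → s i = r i := fun i hi =>
    Set.piecewise_eq_of_notMem _ _ _ (Set.notMem_Iic.mpr hi)
  refine ⟨⟨by rw [hs_le 0 (Nat.zero_le _)]; exact hq.1, fun i => ?_⟩, fun n => ?_⟩
  · rcases lt_trichotomy i j with hij | rfl | hij
    · rw [hs_le i hij.le, hs_le (i + 1) hij]; exact hq.2 i hij
    · rw [hs_le i le_rfl, hs_gt (i + 1) (lt_add_one i)]; exact hjoin
    · rw [hs_gt i hij, hs_gt (i + 1) (by omega)]; exact hr.1.2 i
  · obtain ⟨i, hi, hiF⟩ := hr.2 (max n (j + 1))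
    exact ⟨i, le_of_max_le_left hi, by rwa [hs_gt i (by omega)]⟩

theorem prefixProfile_piecewise (q r : ℕ → Q) (j : ℕ) :
    A.prefixProfile ((Set.Iic j).piecewise q r) j = A.prefixProfile q j :=
  prefixProfile_eq_iff.mpr fun i hi => by rw [Set.piecewise_eq_of_mem _ _ _ (Set.mem_Iic.mpr hi)]

variable (A w) in
def IsMaxAcceptingRun (r : ℕ → Q) (n : ℕ) : Prop :=
  A.IsAcceptingRun w r ∧ ∀ p, A.IsAcceptingRun w p → A.prefixProfile p n ≤ A.prefixProfile r n

theorem exists_isMaxAcceptingRun (h : AcceptsNBW A w) (n : ℕ) :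
    ∃ r, A.IsMaxAcceptingRun w r n :=
  A.exists_forall_prefixProfile_le (S := {p | A.IsAcceptingRun w p}) h n

namespace IsMaxAcceptingRun

variable {r : ℕ → Q} {n : ℕ}

theorem prefixProfile_le_of_join (hr : A.IsMaxAcceptingRun w r n) {q : ℕ → Q} {j : ℕ}
    (hjn : j ≤ n) (hq : A.IsRunPrefix w q j) (hjoin : r (j + 1) ∈ A.ρ (q j) (w j)) :
    A.prefixProfile q j ≤ A.prefixProfile r j := by
  by_contra! hlt
  rw [← prefixProfile_piecewise q r] at hlt
  exact (prefixProfile_lt_of_lt hjn hlt).not_ge (hr.2 _ (hr.1.piecewise hq hjoin))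

theorem isMaxProfile (hr : A.IsMaxAcceptingRun w r n) {j : ℕ} (hjn : j ≤ n) :
    IsMaxProfile A w (r j, j) (A.prefixProfile r j) := by
  refine ⟨mem_runProfiles.mpr ⟨r, ⟨hr.1.1.1, fun i _ => hr.1.1.2 i⟩, rfl, rfl⟩, fun L hL => ?_⟩
  obtain ⟨q, hq, hqj, rfl⟩ := mem_runProfiles.mp hL
  exact (lexLE_iff_le _ _).mpr (hr.prefixProfile_le_of_join hjn hq (hqj ▸ hr.1.1.2 j))

theorem edgeG' (hr : A.IsMaxAcceptingRun w r n) {j : ℕ} (hjn : j < n) :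
    edgeG' A w (r j, j) (r (j + 1), j + 1) := by
  refine ⟨⟨⟨_, (hr.isMaxProfile hjn.le).1⟩, rfl, hr.1.1.2 j⟩, ?_⟩
  rintro ⟨q', j'⟩ ⟨hq', hj', hstep⟩
  obtain rfl : j = j' := by simpa using hj'
  obtain ⟨q, hq, hqj, hprof⟩ := mem_runProfiles.mp (isMaxProfile_profile hq').1
  rw [hprof, profile_eq_of_isMaxProfile (hr.isMaxProfile hjn.le), lexLE_iff_le]
  exact hr.prefixProfile_le_of_join hjn.le hq (by simpa [hqj] using hstep)

theorem prefixProfile_eq {s : ℕ → Q} {m : ℕ} (hs : A.IsMaxAcceptingRun w s m)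
    (hr : A.IsMaxAcceptingRun w r n) (hmn : m ≤ n) :
    A.prefixProfile r m = A.prefixProfile s m :=
  (hs.2 r hr.1).antisymm <| not_lt.mp fun hlt =>
    (prefixProfile_lt_of_lt hmn hlt).not_ge (hr.2 s hs.1)

end IsMaxAcceptingRun

theorem mem_F_iff_of_isMaxAcceptingRun {r : ℕ → ℕ → Q}
    (hr : ∀ n, A.IsMaxAcceptingRun w (r n) n) {j n : ℕ} (hjn : j ≤ n) :
    r n j ∈ A.F ↔ r j j ∈ A.F :=
  prefixProfile_eq_iff.mp ((hr j).prefixProfile_eq (hr n) hjn) j le_rfl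

theorem exists_ge_diag_mem_F_of_isMaxAcceptingRun {r : ℕ → ℕ → Q}
    (hr : ∀ n, A.IsMaxAcceptingRun w (r n) n) (n : ℕ) : ∃ i ≥ n, r i i ∈ A.F := by
  by_contra! hnF
  -- `r n` meets `F` at some `i ≥ n` but `r i` avoids `F` after `n`, so `r n` beats `r i` at `i`
  obtain ⟨i, hin, hiF⟩ := (hr n).1.2 n
  have hle : A.prefixProfile (r i) i ≤ A.prefixProfile (r n) i := by
    refine prefixProfile_mono fun j hji hjF => ?_
    have hjj := (mem_F_iff_of_isMaxAcceptingRun hr hji).mp hjF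
    rcases le_or_gt j n with hjn | hnj
    · exact (mem_F_iff_of_isMaxAcceptingRun hr hjn).mpr hjj
    · exact absurd hjj (hnF j hnj.le)
  have hne : A.prefixProfile (r i) i ≠ A.prefixProfile (r n) i := fun heq =>
    hnF i hin ((prefixProfile_eq_iff.mp heq i le_rfl).mpr hiF)
  exact (hle.lt_of_ne hne).not_ge ((hr i).2 _ (hr n).1)

end NBW

theorem gprime_accepting_iff_accepts_general [Fintype Q]
    (A : NBW Alph Q) (w : ℕ → Alph) :
    GprimeAccepting A w ↔ AcceptsNBW A w := by
  refine ⟨fun ⟨p, hp0, hpE, hpF⟩ => ⟨p, ⟨hp0, fun i => (hpE i).1.2.2⟩, hpF⟩, fun hacc => ?_⟩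
  choose r hr using NBW.exists_isMaxAcceptingRun hacc
  obtain ⟨p, hp0, hp⟩ := exists_path_of_forall_exists_finite_path A.Qin
    (fun j a b => edgeG' A w (a, j) (b, j + 1) ∧ (b ∈ A.F ↔ r (j + 1) (j + 1) ∈ A.F))
    fun n => ⟨r n, (hr n).1.1.1, fun j hj =>
      ⟨(hr n).edgeG' hj, NBW.mem_F_iff_of_isMaxAcceptingRun hr hj⟩⟩
  refine ⟨p, hp0, fun i => (hp i).1, fun n => ?_⟩
  obtain ⟨i, hi, hiF⟩ := NBW.exists_ge_diag_mem_F_of_isMaxAcceptingRun hr (n + 1)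
  obtain ⟨k, rfl⟩ : ∃ k, i = k + 1 := ⟨i - 1, by omega⟩
  exact ⟨k + 1, by omega, (hp k).2.mpr hiF⟩

/-- Theorem: `G'` is accepting iff `A` accepts `w`. -/
theorem gprime_accepting_iff_accepts [Fintype Alph] [Fintype Q]
    (A : NBW Alph Q) (w : ℕ → Alph) :
    GprimeAccepting A w ↔ AcceptsNBW A w :=
  gprime_accepting_iff_accepts_general A w
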